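/- arXiv:1005.0975 — 3 statements merged into one kernel-verified Lean document; each statement's English description precedes it below -/
import Mathlib

section
/- Every convex function u : ℝ³ → ℝ (convex in the standard Euclidean sense) is H-convex on the Heisenberg group, i.e. u(g·δ_λ(g⁻¹g')) ≤ (1-λ)u(g) + λu(g') for all g, all g' in the horizontal plane H_g, and all λ ∈ [0,1]. -/
noncomputable def hmul (g g' : ℝ × ℝ × ℝ) : ℝ × ℝ × ℝ :=
  (g.1 + g'.1, g.2.1 + g'.2.1, g.2.2 + g'.2.2 + (g.1 * g'.2.1 - g'.1 * g.2.1) / 2)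

noncomputable def hinv (g : ℝ × ℝ × ℝ) : ℝ × ℝ × ℝ := (-g.1, -g.2.1, -g.2.2)

noncomputable def dil (l : ℝ) (g : ℝ × ℝ × ℝ) : ℝ × ℝ × ℝ :=
  (l * g.1, l * g.2.1, l ^ 2 * g.2.2)

/-- The horizontal plane through `g`. -/
def HP (g : ℝ × ℝ × ℝ) : Set (ℝ × ℝ × ℝ) :=
  {g' | g'.2.2 = g.2.2 + (g.1 * g'.2.1 - g'.1 * g.2.1) / 2}

/-- Projection on the first layer. -/
noncomputable def xi1 (g : ℝ × ℝ × ℝ) : ℝ × ℝ := (g.1, g.2.1)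

/-- The twisted convex combination `σ_{g,g'}(λ) = g · δ_λ(g⁻¹ g')`. -/
noncomputable def tcc (g g' : ℝ × ℝ × ℝ) (l : ℝ) : ℝ × ℝ × ℝ :=
  hmul g (dil l (hmul (hinv g) g'))

theorem tcc_eq_of_mem_HP {g g' : ℝ × ℝ × ℝ} (h : g' ∈ HP g) (l : ℝ) :
    tcc g g' l = (1 - l) • g + l • g' := by
  rw [HP, Set.mem_ofPred_eq] at h
  simp only [tcc, hmul, hinv, dil, Prod.smul_def, Prod.mk_add_mk, smul_eq_mul, Prod.mk.injEq]
  refine ⟨by ring, by ring, ?_⟩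
  rw [h]
  ring

/-- Every Euclidean-convex function `u : ℝ³ → ℝ` is H-convex on the Heisenberg
group. -/
theorem convex_implies_Hconvex (u : ℝ × ℝ × ℝ → ℝ)
    (hu : ConvexOn ℝ Set.univ u) :
    ∀ g g' : ℝ × ℝ × ℝ, g' ∈ HP g → ∀ l ∈ Set.Icc (0 : ℝ) 1,
      u (tcc g g' l) ≤ (1 - l) * u g + l * u g' := by
  intro g g' hg' l hl
  rw [tcc_eq_of_mem_HP hg']
  exact hu.2 trivial trivial (sub_nonneg.2 hl.2) hl.1 (sub_add_cancel 1 l)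
end

section
/- Let Ω ⊆ ℍ be open and H-convex, and let u : Ω → ℝ. If for every g ∈ Ω the H-subdifferential ∂_H u(g) = {p ∈ ℝ² : u(g') ≥ u(g) + ⟨p, ξ₁(g') - ξ₁(g)⟩ for all g' ∈ H_g ∩ Ω} is nonempty, then u is H-convex on Ω. -/
/-!
Fix `g, g' ∈ Ω` with `g' ∈ H_g` and put `g_λ = g · δ_λ(g⁻¹g') ∈ Ω`. Both `g` and `g'` lie in the
horizontal plane through `g_λ`, and `ξ₁(g_λ) = (1-λ) ξ₁(g) + λ ξ₁(g')`. Averaging the two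
subgradient inequalities at `g_λ` with weights `1-λ` and `λ` cancels the linear terms.
-/

theorem le_convexComb_of_linear_support {E : Type*} [AddCommGroup E] [Module ℝ E]
    (φ : E →ₗ[ℝ] ℝ) {a b : E} {ua ub uc l : ℝ} (hl0 : 0 ≤ l) (hl1 : l ≤ 1)
    (ha : uc + φ (a - ((1 - l) • a + l • b)) ≤ ua)
    (hb : uc + φ (b - ((1 - l) • a + l • b)) ≤ ub) :
    uc ≤ (1 - l) * ua + l * ub := by
  have hcancel :
      (1 - l) * φ (a - ((1 - l) • a + l • b)) + l * φ (b - ((1 - l) • a + l • b)) = 0 := by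
    simp only [map_sub, map_add, map_smul, smul_eq_mul]
    ring
  nlinarith [mul_le_mul_of_nonneg_left ha (sub_nonneg.2 hl1), mul_le_mul_of_nonneg_left hb hl0]

theorem xi1_tcc (g g' : ℝ × ℝ × ℝ) (l : ℝ) :
    xi1 (tcc g g' l) = (1 - l) • xi1 g + l • xi1 g' := by
  simp only [xi1, tcc, hmul, hinv, dil, Prod.smul_mk, smul_eq_mul, Prod.mk_add_mk, Prod.mk.injEq]
  constructor <;> ring

theorem mem_HP_tcc_left {g g' : ℝ × ℝ × ℝ} (h : g' ∈ HP g) (l : ℝ) : g ∈ HP (tcc g g' l) := by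
  simp only [HP, tcc, hmul, hinv, dil, Set.mem_ofPred_eq] at h ⊢
  linear_combination (-l ^ 2) * h

theorem mem_HP_tcc_right {g g' : ℝ × ℝ × ℝ} (h : g' ∈ HP g) (l : ℝ) : g' ∈ HP (tcc g g' l) := by
  simp only [HP, tcc, hmul, hinv, dil, Set.mem_ofPred_eq] at h ⊢
  linear_combination (1 - l ^ 2) * h

theorem Hsubdifferentiable_implies_Hconvex_general (Ω : Set (ℝ × ℝ × ℝ))
    (hΩHconv : ∀ g ∈ Ω, ∀ g' ∈ HP g ∩ Ω, ∀ l ∈ Set.Icc (0 : ℝ) 1, tcc g g' l ∈ Ω)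
    (u : ℝ × ℝ × ℝ → ℝ)
    (hsub : ∀ g ∈ Ω, ∃ p : ℝ × ℝ, ∀ g' ∈ HP g ∩ Ω,
      u g' ≥ u g + (p.1 * ((xi1 g').1 - (xi1 g).1) + p.2 * ((xi1 g').2 - (xi1 g).2))) :
    ∀ g ∈ Ω, ∀ g' ∈ HP g ∩ Ω, ∀ l ∈ Set.Icc (0 : ℝ) 1,
      u (tcc g g' l) ≤ (1 - l) * u g + l * u g' := by
  rintro g hg g' ⟨hHP, hg'⟩ l ⟨hl0, hl1⟩
  obtain ⟨p, hp⟩ := hsub _ (hΩHconv g hg g' ⟨hHP, hg'⟩ l ⟨hl0, hl1⟩)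
  let φ : ℝ × ℝ →ₗ[ℝ] ℝ := p.1 • LinearMap.fst ℝ ℝ ℝ + p.2 • LinearMap.snd ℝ ℝ ℝ
  have hsupport : ∀ h ∈ HP (tcc g g' l) ∩ Ω,
      u (tcc g g' l) + φ (xi1 h - xi1 (tcc g g' l)) ≤ u h := hp
  refine le_convexComb_of_linear_support φ (a := xi1 g) (b := xi1 g') hl0 hl1 ?_ ?_ <;>
    rw [← xi1_tcc]
  · exact hsupport g ⟨mem_HP_tcc_left hHP l, hg⟩
  · exact hsupport g' ⟨mem_HP_tcc_right hHP l, hg'⟩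

/-- If `Ω ⊆ ℍ` is open and H-convex and the H-subdifferential of `u : Ω → ℝ`
is nonempty at every point of `Ω`, then `u` is H-convex on `Ω`. -/
theorem Hsubdifferentiable_implies_Hconvex (Ω : Set (ℝ × ℝ × ℝ))
    (hΩopen : IsOpen Ω)
    (hΩHconv : ∀ g ∈ Ω, ∀ g' ∈ HP g ∩ Ω, ∀ l ∈ Set.Icc (0 : ℝ) 1, tcc g g' l ∈ Ω)
    (u : ℝ × ℝ × ℝ → ℝ)
    (hsub : ∀ g ∈ Ω, ∃ p : ℝ × ℝ, ∀ g' ∈ HP g ∩ Ω,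
      u g' ≥ u g + (p.1 * ((xi1 g').1 - (xi1 g).1) + p.2 * ((xi1 g').2 - (xi1 g).2))) :
    ∀ g ∈ Ω, ∀ g' ∈ HP g ∩ Ω, ∀ l ∈ Set.Icc (0 : ℝ) 1,
      u (tcc g g' l) ≤ (1 - l) * u g + l * u g' :=
  Hsubdifferentiable_implies_Hconvex_general Ω hΩHconv u hsub
end

section
/- Let c : G × V → ℝ, u : Ω → ℝ, and suppose g₀ ∈ interior(Ω) is such that p ∈ ∂_H^c u(g₀), the horizontal gradient 𝕏u(g₀) exists, and 𝕏c(g₀, p) exists. Then 𝕏u(g₀) = 𝕏c(g₀, p). Consequently if 𝕏c(g₀,·) : V → V is injective, ∂_H^c u(g₀) is at most a singleton and equals {(𝕏c(g₀,·))⁻¹(𝕏u(g₀))}. -/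
/-- Parametrization of the horizontal plane `H_{g₀}` by the first layer. -/
noncomputable def hparam (g₀ : ℝ × ℝ × ℝ) (w : ℝ × ℝ) : ℝ × ℝ × ℝ :=
  (w.1, w.2, g₀.2.2 + (g₀.1 * w.2 - w.1 * g₀.2.1) / 2)

/-!
On the horizontal plane `H_{g₀}`, parametrized by the first layer, `g ↦ u g - c g p` has a
minimum at `g₀`; since `g₀` is interior to `Ω`, this is a local minimum of a function of
`w ∈ ℝ²` that is differentiable at `ξ₁ g₀`, so Fermat's rule gives `𝕏u(g₀) - 𝕏c(g₀, p) = 0`.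
The same holds for every `q ∈ ∂_H^c u(g₀)`, so injectivity of `𝕏c(g₀, ·)` forces `q = p`.
-/

open Topology

/-- The horizontal `c`-subdifferential `∂_H^c u(g₀)`. -/
def cHSubdiff (c : ℝ × ℝ × ℝ → ℝ × ℝ → ℝ) (Ω : Set (ℝ × ℝ × ℝ)) (u : ℝ × ℝ × ℝ → ℝ)
    (g₀ : ℝ × ℝ × ℝ) : Set (ℝ × ℝ) :=
  {q | ∀ g ∈ HP g₀ ∩ Ω, u g - c g q ≥ u g₀ - c g₀ q}

theorem hparam_xi1 (g : ℝ × ℝ × ℝ) : hparam g (xi1 g) = g := by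
  ext <;> simp [hparam, xi1]

theorem hparam_mem_HP (g : ℝ × ℝ × ℝ) (w : ℝ × ℝ) : hparam g w ∈ HP g := by
  simp [HP, hparam]

theorem continuous_hparam (g : ℝ × ℝ × ℝ) : Continuous (hparam g) := by
  unfold hparam
  fun_prop

theorem HasFDerivAt.eq_of_isLocalMin_sub {E : Type*} [NormedAddCommGroup E] [NormedSpace ℝ E]
    {f g : E → ℝ} {f' g' : E →L[ℝ] ℝ} {a : E} (hf : HasFDerivAt f f' a)
    (hg : HasFDerivAt g g' a) (hmin : IsLocalMin (fun x => f x - g x) a) : f' = g' :=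
  sub_eq_zero.mp (hmin.hasFDerivAt_eq_zero (hf.sub hg))

theorem isLocalMin_comp_hparam {F : ℝ × ℝ × ℝ → ℝ} {Ω : Set (ℝ × ℝ × ℝ)} {g₀ : ℝ × ℝ × ℝ}
    (hg₀ : g₀ ∈ interior Ω) (hmin : ∀ g ∈ HP g₀ ∩ Ω, F g₀ ≤ F g) :
    IsLocalMin (fun w => F (hparam g₀ w)) (xi1 g₀) := by
  have hnhds : hparam g₀ ⁻¹' interior Ω ∈ 𝓝 (xi1 g₀) :=
    (continuous_hparam g₀).continuousAt.preimage_mem_nhds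
      (by rw [hparam_xi1]; exact isOpen_interior.mem_nhds hg₀)
  filter_upwards [hnhds] with w hw
  simpa only [hparam_xi1] using hmin _ ⟨hparam_mem_HP g₀ w, interior_subset hw⟩

theorem hgrad_eq_of_mem_cHSubdiff {c : ℝ × ℝ × ℝ → ℝ × ℝ → ℝ} {Ω : Set (ℝ × ℝ × ℝ)}
    {u : ℝ × ℝ × ℝ → ℝ} {g₀ : ℝ × ℝ × ℝ} (hg₀ : g₀ ∈ interior Ω) {q : ℝ × ℝ}
    (hq : q ∈ cHSubdiff c Ω u g₀) {Du Dcq : (ℝ × ℝ) →L[ℝ] ℝ}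
    (hDu : HasFDerivAt (fun w => u (hparam g₀ w)) Du (xi1 g₀))
    (hDcq : HasFDerivAt (fun w => c (hparam g₀ w) q) Dcq (xi1 g₀)) : Du = Dcq :=
  hDu.eq_of_isLocalMin_sub hDcq
    (isLocalMin_comp_hparam (F := fun g => u g - c g q) hg₀ fun g hg => hq g hg)

/-- If `p ∈ ∂_H^c u(g₀)` at an interior point `g₀` of `Ω`, and the horizontal
gradients `𝕏u(g₀)` and `𝕏c(g₀,·)` exist (as Fréchet derivatives along the
parametrized horizontal plane), then `𝕏u(g₀) = 𝕏c(g₀,p)`; consequently, if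
`𝕏c(g₀,·)` is injective then `∂_H^c u(g₀) = {p}`. -/
theorem cHsubdifferential_gradient
    (c : ℝ × ℝ × ℝ → ℝ × ℝ → ℝ) (Ω : Set (ℝ × ℝ × ℝ)) (u : ℝ × ℝ × ℝ → ℝ)
    (g₀ : ℝ × ℝ × ℝ) (hg₀ : g₀ ∈ interior Ω) (p : ℝ × ℝ)
    (hp : ∀ g ∈ HP g₀ ∩ Ω, u g - c g p ≥ u g₀ - c g₀ p)
    (Du : (ℝ × ℝ) →L[ℝ] ℝ) (hDu : HasFDerivAt (fun w => u (hparam g₀ w)) Du (xi1 g₀))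
    (Dc : ℝ × ℝ → ((ℝ × ℝ) →L[ℝ] ℝ))
    (hDc : ∀ q : ℝ × ℝ, HasFDerivAt (fun w => c (hparam g₀ w) q) (Dc q) (xi1 g₀)) :
    Du = Dc p ∧
      (Function.Injective Dc →
        {q : ℝ × ℝ | ∀ g ∈ HP g₀ ∩ Ω, u g - c g q ≥ u g₀ - c g₀ q} = {p}) := by
  have hgrad : ∀ q ∈ cHSubdiff c Ω u g₀, Du = Dc q := fun q hq =>
    hgrad_eq_of_mem_cHSubdiff hg₀ hq hDu (hDc q)
  refine ⟨hgrad p hp, fun hinj => ?_⟩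
  change cHSubdiff c Ω u g₀ = {p}
  exact Set.eq_singleton_iff_unique_mem.mpr
    ⟨hp, fun q hq => hinj ((hgrad q hq).symm.trans (hgrad p hp))⟩
end
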